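/- arXiv:2411.16379 — 4 statements merged into one kernel-verified Lean document; each statement's English description precedes it below -/
import Mathlib

section
/- Let n ≥ 1 and let a be the n×n lower-triangular Pascal matrix over the integers, with (i,j) entry equal to the binomial coefficient C(i−1, j−1) when i ≥ j and 0 when i < j, and set a₀ = a − I. For every ℓ ≥ 1: (a₀^ℓ)_{j,1} = 0 for all j ≤ ℓ, and if ℓ + 1 ≤ n then (a₀^ℓ)_{ℓ+1,1} = ℓ!. -/
/-! `a - 1` is strictly lower triangular with subdiagonal entries `C(k+1, k) = k+1`. In a power
`N ^ ℓ` of a strictly lower triangular matrix every nonzero entry `(i, j)` has `i ≥ j + ℓ`, and the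
entry `(j + ℓ, j)` is the product of the `ℓ` subdiagonal entries below it, since a path of length
`ℓ` that descends by at least one row per step can only reach row `j + ℓ` one row at a time. -/

open Finset

namespace Matrix

variable {R : Type*} {n : ℕ}

theorem pow_apply_eq_zero_of_lt_add [Semiring R] {N : Matrix (Fin n) (Fin n) R}
    (hN : ∀ i j : Fin n, (i : ℕ) ≤ j → N i j = 0) (ℓ : ℕ) (i j : Fin n)
    (hij : (i : ℕ) < j + ℓ) : (N ^ ℓ) i j = 0 := by
  induction ℓ generalizing i with
  | zero => exact one_apply_ne (Fin.ne_of_lt (by simpa using hij))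
  | succ ℓ ih =>
    rw [pow_succ', mul_apply]
    refine sum_eq_zero fun k _ => ?_
    by_cases hk : (k : ℕ) < j + ℓ
    · rw [ih k hk, mul_zero]
    · rw [hN i k (by omega), zero_mul]

theorem pow_apply_eq_prod_of_eq_add [CommSemiring R] {N : Matrix (Fin n) (Fin n) R}
    (hN : ∀ i j : Fin n, (i : ℕ) ≤ j → N i j = 0) {d : ℕ → R}
    (hd : ∀ i j : Fin n, (i : ℕ) = j + 1 → N i j = d j) (ℓ : ℕ) (i j : Fin n)
    (hij : (i : ℕ) = j + ℓ) : (N ^ ℓ) i j = ∏ k ∈ range ℓ, d (j + k) := by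
  induction ℓ generalizing i with
  | zero => simp [Fin.ext (hij.trans (add_zero _))]
  | succ ℓ ih =>
    let k : Fin n := ⟨j + ℓ, by omega⟩
    have hterm : ∀ k' : Fin n, k' ≠ k → N i k' * (N ^ ℓ) k' j = 0 := fun k' hk' => by
      by_cases hlt : (k' : ℕ) < j + ℓ
      · rw [pow_apply_eq_zero_of_lt_add hN ℓ k' j hlt, mul_zero]
      · rw [hN i k' (by have : (k' : ℕ) ≠ j + ℓ := fun h => hk' (Fin.ext h); omega), zero_mul]
    rw [pow_succ', mul_apply, sum_eq_single k (fun k' _ => hterm k') (by simp),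
      hd i k (by omega), ih k rfl, prod_range_succ, mul_comm]

end Matrix

theorem pascal_sub_one_apply {n : ℕ} {a : Matrix (Fin n) (Fin n) ℤ}
    (ha : ∀ i j : Fin n, a i j =
      if (j : ℕ) ≤ (i : ℕ) then ((i : ℕ).choose (j : ℕ) : ℤ) else 0) (i j : Fin n) :
    (a - 1) i j = if (j : ℕ) < i then ((i : ℕ).choose j : ℤ) else 0 := by
  rw [Matrix.sub_apply, Matrix.one_apply, ha]
  rcases lt_trichotomy (j : ℕ) i with h | h | h
  · simp [h.le, h, (Fin.ne_of_lt h).symm]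
  · simp [Fin.ext h]
  · simp [h.not_ge, h.not_gt, Fin.ne_of_lt h]

theorem pascal_pow_col_one_general (n : ℕ) (hn : 1 ≤ n) (a : Matrix (Fin n) (Fin n) ℤ)
    (ha : ∀ i j : Fin n, a i j =
      if (j : ℕ) ≤ (i : ℕ) then ((i : ℕ).choose (j : ℕ) : ℤ) else 0)
    (ℓ : ℕ) :
    (∀ j : Fin n, (j : ℕ) < ℓ → ((a - 1) ^ ℓ) j ⟨0, hn⟩ = 0) ∧
    (∀ h : ℓ + 1 ≤ n, ((a - 1) ^ ℓ) ⟨ℓ, h⟩ ⟨0, hn⟩ = (Nat.factorial ℓ : ℤ)) := by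
  have hlower : ∀ i j : Fin n, (i : ℕ) ≤ j → (a - 1) i j = 0 := fun i j hij => by
    rw [pascal_sub_one_apply ha, if_neg hij.not_gt]
  have hsubdiag : ∀ i j : Fin n, (i : ℕ) = j + 1 → (a - 1) i j = (j : ℕ) + 1 :=
    fun i j hij => by
      rw [pascal_sub_one_apply ha, if_pos (by omega), hij, Nat.choose_succ_self_right,
        Nat.cast_succ]
  refine ⟨fun j hj => Matrix.pow_apply_eq_zero_of_lt_add hlower ℓ j _ (by simpa using hj),
    fun h => ?_⟩
  rw [Matrix.pow_apply_eq_prod_of_eq_add hlower (d := fun k => (k + 1 : ℤ)) hsubdiag ℓ _ _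
    (by simp)]
  simp only [zero_add]
  exact_mod_cast prod_range_add_one_eq_factorial ℓ

/-- Lemma 2.5(1): if `a` is the `n × n` lower-triangular Pascal matrix (with `(i,j)` entry
`C(i-1, j-1)` for `i ≥ j`, indexed here from `0`, so entry `(i,j)` is `C(i,j)`) and
`a₀ = a - I`, then for `ℓ ≥ 1` the first column of `a₀^ℓ` vanishes in rows `1, …, ℓ`
(one-indexed `j ≤ ℓ`), and its `(ℓ+1, 1)`-st (one-indexed) entry equals `ℓ!`. -/
theorem pascal_pow_col_one (n : ℕ) (hn : 1 ≤ n) (a : Matrix (Fin n) (Fin n) ℤ)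
    (ha : ∀ i j : Fin n, a i j =
      if (j : ℕ) ≤ (i : ℕ) then ((i : ℕ).choose (j : ℕ) : ℤ) else 0)
    (ℓ : ℕ) (hℓ : 1 ≤ ℓ) :
    (∀ j : Fin n, (j : ℕ) < ℓ → ((a - 1) ^ ℓ) j ⟨0, hn⟩ = 0) ∧
    (∀ h : ℓ + 1 ≤ n, ((a - 1) ^ ℓ) ⟨ℓ, h⟩ ⟨0, hn⟩ = (Nat.factorial ℓ : ℤ)) :=
  pascal_pow_col_one_general n hn a ha ℓ
end

section
/- Let n ≥ 1 and let a be the n×n lower-triangular Pascal matrix over the integers, with (i,j) entry equal to the binomial coefficient C(i−1, j−1) when i ≥ j and 0 when i < j, and set a₀ = a − I. For every ℓ ≥ 1 with ℓ + 2 ≤ n, the (ℓ+2, 1) entry of a₀^ℓ equals C(ℓ+1, ℓ−1) · ℓ!. -/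
section Aux
variable {n : ℕ} {a : Matrix (Fin n) (Fin n) ℤ}

def HA (a : Matrix (Fin n) (Fin n) ℤ) : Prop := ∀ i j : Fin n, a i j =
      if (j : ℕ) ≤ (i : ℕ) then ((i : ℕ).choose (j : ℕ) : ℤ) else 0

lemma ha0 (ha : HA a) (i j : Fin n) :
    (a - 1) i j = if (j : ℕ) < (i : ℕ) then ((i : ℕ).choose (j : ℕ) : ℤ) else 0 := by
  rw [Matrix.sub_apply, ha, Matrix.one_apply]
  rcases lt_trichotomy (j : ℕ) (i : ℕ) with h | h | h
  · have hne : i ≠ j := fun e => by omega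
    simp [h, h.le, hne]
  · have he : i = j := Fin.ext h.symm
    simp [he]
  · have hne : i ≠ j := fun e => by omega
    simp [h, not_le.mpr h, hne, Nat.lt_asymm h]

lemma pow_zero_below (ha : HA a) : ∀ ℓ (i j : Fin n), (i : ℕ) < (j : ℕ) + ℓ → ((a - 1) ^ ℓ) i j = 0 := by
  intro ℓ
  induction ℓ with
  | zero =>
    intro i j hij
    have hne : i ≠ j := fun e => by omega
    simp [Matrix.one_apply, hne]
  | succ m ih =>
    intro i j hij
    rw [pow_succ', Matrix.mul_apply]
    apply Finset.sum_eq_zero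
    intro k _
    rcases le_or_gt (i : ℕ) (k : ℕ) with hk | hk
    · rw [ha0 ha, if_neg (by omega), zero_mul]
    · rw [ih k j (by omega), mul_zero]

lemma pow_subdiag (ha : HA a) (h0 : 0 < n) : ∀ ℓ (hℓ : ℓ < n),
    ((a - 1) ^ ℓ) ⟨ℓ, hℓ⟩ ⟨0, h0⟩ = (Nat.factorial ℓ : ℤ) := by
  intro ℓ
  induction ℓ with
  | zero => simp [Matrix.one_apply]
  | succ m ih =>
    intro hℓ
    rw [pow_succ', Matrix.mul_apply]
    rw [Finset.sum_eq_single (⟨m, by omega⟩ : Fin n)]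
    · rw [ha0 ha, ih (by omega)]
      simp [Nat.choose_succ_self_right, Nat.factorial_succ]

    · intro k _ hk
      rcases le_or_gt (m + 1) (k : ℕ) with hkk | hkk
      · rw [ha0 ha, if_neg (by simp; omega), zero_mul]
      · have : (k : ℕ) < m := by
          rcases Nat.lt_or_ge (k : ℕ) m with h' | h'
          · exact h'
          · exfalso; apply hk; apply Fin.ext; show (k:ℕ) = m; omega
        rw [pow_zero_below ha m k ⟨0, h0⟩ (by show (k:ℕ) < 0 + m; omega), mul_zero]
    · intro hmem; exact absurd (Finset.mem_univ _) hmem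

lemma pow_subsubdiag (ha : HA a) (h0 : 0 < n) : ∀ ℓ, 1 ≤ ℓ → ∀ (hℓ : ℓ + 1 < n),
    2 * ((a - 1) ^ ℓ) ⟨ℓ + 1, hℓ⟩ ⟨0, h0⟩ = (ℓ : ℤ) * (Nat.factorial (ℓ + 1) : ℤ) := by
  intro ℓ hℓ1
  induction ℓ, hℓ1 using Nat.le_induction with
  | base =>
    intro hℓ
    rw [pow_one, ha0 ha]
    norm_num [Nat.factorial]
  | succ m hm ih =>
    intro hℓ
    rw [pow_succ', Matrix.mul_apply]
    have hk1 : m + 1 < n := by omega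
    have hk0 : m < n := by omega
    set k₁ : Fin n := ⟨m + 1, hk1⟩
    set k₂ : Fin n := ⟨m, hk0⟩
    have hpair : ({k₁, k₂} : Finset (Fin n)) ⊆ Finset.univ := Finset.subset_univ _
    have hzero : ∀ k ∈ Finset.univ, k ∉ ({k₁, k₂} : Finset (Fin n)) →
        (a - 1) ⟨m + 2, hℓ⟩ k * ((a - 1) ^ m) k ⟨0, h0⟩ = 0 := by
      intro k _ hk
      simp only [Finset.mem_insert, Finset.mem_singleton] at hk
      push_neg at hk
      obtain ⟨h1, h2⟩ := hk
      rcases le_or_gt (m + 2) (k : ℕ) with hkk | hkk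
      · rw [ha0 ha, if_neg (by simp; omega), zero_mul]
      · have : (k : ℕ) < m := by
          have e1 : (k : ℕ) ≠ m + 1 := fun e => h1 (Fin.ext e)
          have e2 : (k : ℕ) ≠ m := fun e => h2 (Fin.ext e)
          omega
        rw [pow_zero_below ha m k ⟨0, h0⟩ (by show (k:ℕ) < 0 + m; omega), mul_zero]
    rw [← Finset.sum_subset hpair hzero]
    have hne : k₁ ≠ k₂ := by simp [k₁, k₂, Fin.ext_iff]
    rw [Finset.sum_pair hne]
    have e1 : ((a - 1) ^ m) k₁ ⟨0, h0⟩ = ((a-1)^m) ⟨m+1, hk1⟩ ⟨0, h0⟩ := rfl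
    have e2 : ((a - 1) ^ m) k₂ ⟨0, h0⟩ = (Nat.factorial m : ℤ) := pow_subdiag ha h0 m hk0
    have hIH := ih hk1
    rw [mul_add, e2]
    rw [ha0 ha (⟨m+2, hℓ⟩ : Fin n) k₁, ha0 ha (⟨m+2, hℓ⟩ : Fin n) k₂]
    simp only [k₁, k₂, if_pos (by omega : (m+1 : ℕ) < m + 2), if_pos (by omega : (m : ℕ) < m + 2)]
    have hc1 : (m + 2).choose (m + 1) = m + 2 := Nat.choose_succ_self_right _
    have hsym : (m + 2).choose m = (m + 2).choose 2 := by
      rw [← Nat.choose_symm (by omega : 2 ≤ m + 2)]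
      congr 1
    have hmul : (m + 2) * (m + 1) = (m + 2).choose 2 * 2 := by
      simpa [Nat.succ_eq_add_one, Nat.choose_one_right, Nat.add_assoc] using
        Nat.add_one_mul_choose_eq (m + 1) 1
    have hc2 : 2 * (m + 2).choose m = (m + 2) * (m + 1) := by
      rw [hsym]
      omega
    have hc2z : (2 : ℤ) * ((m + 2).choose m : ℤ) = ((m : ℤ) + 2) * ((m : ℤ) + 1) := by
      exact_mod_cast congrArg (Nat.cast : ℕ → ℤ) hc2
    rw [e1, hc1]
    have hIH' : 2 * ((a - 1) ^ m) ⟨m + 1, hk1⟩ ⟨0, h0⟩ = (m : ℤ) * ((m + 1) * (Nat.factorial m : ℤ)) := by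
      rw [hIH]; push_cast [Nat.factorial_succ]; ring
    push_cast [Nat.factorial_succ]
    linear_combination ((m : ℤ) + 2) * hIH' + (Nat.factorial m : ℤ) * hc2z
end Aux

/-- Lemma 2.5(3): if `a` is the `n × n` lower-triangular Pascal matrix (with `(i,j)` entry
`C(i-1, j-1)` for `i ≥ j`, indexed here from `0`, so entry `(i,j)` is `C(i,j)`) and
`a₀ = a - I`, then for `ℓ ≥ 1` with `ℓ + 2 ≤ n` the `(ℓ+2, 1)`-st (one-indexed) entry of
`a₀^ℓ` equals `C(ℓ+1, ℓ-1) ⬝ ℓ!`. -/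
theorem pascal_pow_entry (n : ℕ) (hn : 1 ≤ n) (a : Matrix (Fin n) (Fin n) ℤ)
    (ha : ∀ i j : Fin n, a i j =
      if (j : ℕ) ≤ (i : ℕ) then ((i : ℕ).choose (j : ℕ) : ℤ) else 0)
    (ℓ : ℕ) (hℓ : 1 ≤ ℓ) (h : ℓ + 2 ≤ n) :
    ((a - 1) ^ ℓ) ⟨ℓ + 1, h⟩ ⟨0, by omega⟩ =
      ((ℓ + 1).choose (ℓ - 1) : ℤ) * (Nat.factorial ℓ : ℤ) := by
  have hA : HA a := ha
  have h0 : 0 < n := by omega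
  have h1 : ℓ + 1 < n := by omega
  have key := pow_subsubdiag hA h0 ℓ hℓ h1
  have hsym : (ℓ + 1).choose (ℓ - 1) = (ℓ + 1).choose 2 := by
    rw [← Nat.choose_symm (by omega : 2 ≤ ℓ + 1)]
    congr 1
  have hmul : (ℓ + 1) * ℓ = (ℓ + 1).choose 2 * 2 := by
    simpa [Nat.succ_eq_add_one, Nat.choose_one_right, Nat.add_assoc] using
      Nat.add_one_mul_choose_eq ℓ 1
  have hc2 : 2 * (ℓ + 1).choose (ℓ - 1) = (ℓ + 1) * ℓ := by rw [hsym]; omega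
  have hc2z : (2 : ℤ) * ((ℓ + 1).choose (ℓ - 1) : ℤ) = ((ℓ : ℤ) + 1) * (ℓ : ℤ) := by
    exact_mod_cast congrArg (Nat.cast : ℕ → ℤ) hc2
  apply mul_left_cancel₀ (two_ne_zero : (2 : ℤ) ≠ 0)
  have hE : ((a - 1) ^ ℓ) ⟨ℓ + 1, h⟩ ⟨0, by omega⟩ = ((a - 1) ^ ℓ) ⟨ℓ + 1, h1⟩ ⟨0, h0⟩ := rfl
  rw [hE, key]
  push_cast [Nat.factorial_succ]
  linear_combination -(Nat.factorial ℓ : ℤ) * hc2z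
end

section
/- Let p > 3 be a prime, r ≥ 1, and G = SL₂(p^r). For every n with 1 ≤ n ≤ p − 3, the F_p G-module V_n(p^r) does not lift to Z/p²Z. -/
open MvPolynomial Matrix

noncomputable section

/-- The substitution action of a `2 × 2` matrix `g = (a b; c d)` on polynomials in two
variables, sending `x ↦ a·x + b·y` and `y ↦ c·x + d·y`. -/
def polySub {K : Type*} [CommSemiring K] (g : Matrix (Fin 2) (Fin 2) K) :
    MvPolynomial (Fin 2) K →ₐ[K] MvPolynomial (Fin 2) K :=
  MvPolynomial.aeval fun i => ∑ j, g i j • MvPolynomial.X j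

lemma polySub_mul {K : Type*} [CommSemiring K] (g h : Matrix (Fin 2) (Fin 2) K) :
    polySub (g * h) = (polySub h).comp (polySub g) := by
  apply MvPolynomial.algHom_ext
  intro i
  simp only [polySub, MvPolynomial.aeval_X, AlgHom.coe_comp, Function.comp_apply, map_sum,
    _root_.map_smul, Matrix.mul_apply, Finset.sum_smul, smul_smul, Finset.smul_sum]
  rw [Finset.sum_comm]

lemma polySub_one {K : Type*} [CommSemiring K] :
    polySub (1 : Matrix (Fin 2) (Fin 2) K) = AlgHom.id K _ := by
  apply MvPolynomial.algHom_ext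
  intro i
  simp [polySub, Matrix.one_apply, ite_smul]

lemma polySub_mem {K : Type*} [CommSemiring K] (g : Matrix (Fin 2) (Fin 2) K) {n : ℕ}
    {f : MvPolynomial (Fin 2) K} (hf : f ∈ homogeneousSubmodule (Fin 2) K n) :
    polySub g f ∈ homogeneousSubmodule (Fin 2) K n := by
  rw [mem_homogeneousSubmodule] at hf ⊢
  have h1 : ∀ i : Fin 2, MvPolynomial.IsHomogeneous (∑ j, g i j • (MvPolynomial.X j : MvPolynomial (Fin 2) K)) 1 := by
    intro i
    apply MvPolynomial.IsHomogeneous.sum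
    intro j _
    rw [MvPolynomial.smul_eq_C_mul]
    exact (MvPolynomial.isHomogeneous_X K j).C_mul _
  have h2 := hf.aeval (fun i => ∑ j, g i j • (MvPolynomial.X j : MvPolynomial (Fin 2) K)) h1
  rw [one_mul] at h2
  exact h2

/-- The (left) representation of `SL₂(K)` on the space `V_n` of homogeneous polynomials of
degree `n` in two variables over `K`, viewed as a representation over a subring `R`
(e.g. `R = 𝔽_p`) by restriction of scalars.  It corresponds to the classical right action
`x · g = a·x + b·y`, `y · g = c·x + d·y` for `g = (a b; c d)`. -/
def homPolyRep (K : Type*) [Field K] (R : Type*) [CommRing R] [Algebra R K] (n : ℕ) :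
    Representation R (Matrix.SpecialLinearGroup (Fin 2) K)
      (homogeneousSubmodule (Fin 2) K n) where
  toFun g := LinearMap.restrictScalars R
    ((polySub ((g⁻¹ : Matrix.SpecialLinearGroup (Fin 2) K) : Matrix (Fin 2) (Fin 2) K)).toLinearMap.restrict
      (p := homogeneousSubmodule (Fin 2) K n) (q := homogeneousSubmodule (Fin 2) K n)
      (fun _ hx => polySub_mem _ hx))
  map_one' := by
    refine LinearMap.ext fun x => Subtype.ext ?_
    simp [LinearMap.restrict_apply, polySub_one]
  map_mul' g h := by
    refine LinearMap.ext fun x => Subtype.ext ?_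
    simp [LinearMap.restrict_apply, _root_.mul_inv_rev, polySub_mul]

/-- The `𝔽_p SL₂(pʳ)`-module `V_n(pʳ)` of `n`-homogeneous polynomials in two variables over
the field with `pʳ` elements, as a representation of `SL₂(pʳ)` over `𝔽_p = ZMod p`. -/
def Vrep (p r : ℕ) [Fact p.Prime] (n : ℕ) :
    Representation (ZMod p) (Matrix.SpecialLinearGroup (Fin 2) (GaloisField p r))
      (homogeneousSubmodule (Fin 2) (GaloisField p r) n) :=
  homPolyRep (GaloisField p r) (ZMod p) n

/-- A representation `ρ` of `G` over `𝔽_p = ZMod p` *lifts along* a ring homomorphism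
`f : R →+* ZMod p` if the matrix representation `θ : G →* GLₘ(𝔽_p)` attached to a basis of the
module admits a homomorphism `θ̂ : G →* GLₘ(R)` whose entrywise reduction along `f` is `θ`. -/
def LiftsAlong {p : ℕ} {G V : Type*} [Group G] [AddCommGroup V] [Module (ZMod p) V]
    (ρ : Representation (ZMod p) G V) (R : Type*) [CommRing R] (f : R →+* ZMod p) : Prop :=
  ∃ (m : ℕ) (b : Module.Basis (Fin m) (ZMod p) V) (θ : G →* Matrix.GeneralLinearGroup (Fin m) R),
    ∀ g : G, ((θ g : Matrix (Fin m) (Fin m) R)).map f = LinearMap.toMatrix b b (ρ g)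

/-!
The element `u = (1 1; 0 1)⁻¹` of `SL₂(pʳ)` has order `p`, and `ρ(u) - 1` acts on `V_n` as
the difference operator `f(x, y) ↦ f(x + y, y) - f(x, y)`: it is nonzero for `n ≥ 1`, and its
`(n + 1)`-st power vanishes, where `n + 1 ≤ p - 2`. Suppose `A = 1 + X` lifts `ρ(u)` to `ℤ/p²`
with `A ^ p = 1`. Expanding `(1 + X)^p = 1` gives `p (X + X² q) + X^p = 0`, and since `X^(n+1)`
reduces to zero it is `p W` for some `W`, so `X^p = p X^(p-n-1) W`. Reducing
`X + X² q + X^(p-n-1) W` modulo `p` shows that `N = ρ(u) - 1` satisfies `N = N² E`, which for a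
nilpotent `N` forces `N = 0`.
-/

open Polynomial in
theorem exists_one_add_pow_prime_eq {R : Type*} [Ring R] {p : ℕ} (hp : p.Prime) (x : R) :
    ∃ q : R, (1 + x) ^ p = 1 + x ^ p + p * (x + x ^ 2 * q) := by
  obtain ⟨r, hr⟩ := exists_add_pow_prime_eq hp (Polynomial.X : ℤ[X]) 1
  have hr0 : r.coeff 0 = 1 := by
    have h := congrArg (·.coeff 1) hr
    simp only [coeff_X_add_one_pow, Nat.choose_one_right, one_pow, mul_one, mul_assoc,
      Polynomial.coeff_add, Polynomial.coeff_X_pow, hp.one_lt.ne, ↓reduceIte,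
      Polynomial.coeff_one, one_ne_zero, add_zero, coeff_natCast_mul, Polynomial.coeff_X_mul,
      zero_add] at h
    exact (mul_eq_left₀ (Int.natCast_ne_zero.mpr hp.ne_zero)).mp h.symm
  obtain ⟨q, hq⟩ : Polynomial.X ∣ r - 1 := by simp [Polynomial.X_dvd_iff, hr0]
  refine ⟨Polynomial.aeval x q, ?_⟩
  have := congrArg (Polynomial.aeval x) (eq_add_of_sub_eq' hq ▸ hr)
  simp only [map_pow, map_add, map_mul, Polynomial.aeval_X, map_natCast, map_one, one_pow,
    mul_one] at this
  rw [add_comm 1 x, this]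
  noncomm_ring

theorem eq_pow_succ_mul_pow_of_eq_sq_mul {M : Type*} [Monoid M] {a e : M} (h : a = a ^ 2 * e) :
    ∀ k : ℕ, a = a ^ (k + 1) * e ^ k
  | 0 => by simp
  | k + 1 => calc
    a = a ^ k * a * e ^ k := by rw [← pow_succ]; exact eq_pow_succ_mul_pow_of_eq_sq_mul h k
    _ = a ^ k * (a ^ 2 * e) * e ^ k := by rw [← h]
    _ = a ^ (k + 1 + 1) * e ^ (k + 1) := by
      rw [← mul_assoc, mul_assoc, ← pow_succ', ← pow_add]

theorem eq_zero_of_eq_sq_mul {M : Type*} [MonoidWithZero M] {a e : M} (h : a = a ^ 2 * e)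
    (ha : IsNilpotent a) : a = 0 := by
  obtain ⟨k, hk⟩ := ha
  rw [eq_pow_succ_mul_pow_of_eq_sq_mul h k, pow_succ, hk, zero_mul, zero_mul]

theorem map_eq_one_of_pow_prime_eq_one {R S : Type*} [Ring R] [Ring S] (φ : R →+* S) {p : ℕ}
    (hp : p.Prime) (hker : ∀ x, φ x = 0 → ∃ y, x = p * y)
    (htors : ∀ x, (p : R) * x = 0 → φ x = 0) {a : R} (ha : a ^ p = 1) {s : ℕ}
    (hs : s + 2 ≤ p) (hnil : (φ a - 1) ^ s = 0) : φ a = 1 := by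
  set x := a - 1
  obtain ⟨q, hq⟩ := exists_one_add_pow_prime_eq hp x
  obtain ⟨w, hw⟩ := hker (x ^ s) (by simpa [x] using hnil)
  have hxp : x ^ p = p * (x ^ (p - s) * w) := by
    rw [← Nat.sub_add_cancel (by omega : s ≤ p), pow_add, hw, ← mul_assoc,
      (Nat.cast_commute p _).symm.eq, mul_assoc, Nat.sub_add_cancel (by omega : s ≤ p)]
  have htorsion : (p : R) * (x + x ^ 2 * q + x ^ (p - s) * w) = 0 := by
    have h := hq
    rw [show 1 + x = a by simp [x], ha, hxp, add_assoc, eq_comm, add_eq_left] at h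
    rwa [mul_add, add_comm]
  set N := φ a - 1
  have hN : N + N ^ 2 * φ q + N ^ (p - s) * φ w = 0 := by simpa [x, N] using htors _ htorsion
  have hsq : N = N ^ 2 * -(φ q + N ^ (p - s - 2) * φ w) := by
    rw [mul_neg, mul_add, ← mul_assoc, ← pow_add, show 2 + (p - s - 2) = p - s by omega]
    exact eq_neg_of_add_eq_zero_left (by rwa [add_assoc] at hN)
  exact sub_eq_zero.mp (eq_zero_of_eq_sq_mul hsq ⟨s, hnil⟩)

namespace ZMod

variable {p : ℕ}

theorem exists_eq_mul_of_castHom_eq_zero {x : ZMod (p ^ 2)}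
    (hx : castHom (dvd_pow_self p two_ne_zero) (ZMod p) x = 0) : ∃ y, x = p * y := by
  obtain ⟨k, rfl⟩ := intCast_surjective x
  rw [map_intCast, intCast_zmod_eq_zero_iff_dvd] at hx
  obtain ⟨j, rfl⟩ := hx
  exact ⟨j, by push_cast; rfl⟩

theorem castHom_eq_zero_of_mul_eq_zero [NeZero p] {x : ZMod (p ^ 2)}
    (hx : (p : ZMod (p ^ 2)) * x = 0) : castHom (dvd_pow_self p two_ne_zero) (ZMod p) x = 0 := by
  obtain ⟨k, rfl⟩ := intCast_surjective x
  rw [map_intCast, intCast_zmod_eq_zero_iff_dvd]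
  rw [← Int.cast_natCast, ← Int.cast_mul, intCast_zmod_eq_zero_iff_dvd, Nat.cast_pow, sq] at hx
  exact (mul_dvd_mul_iff_left (by exact_mod_cast NeZero.ne p)).mp hx

end ZMod

namespace Matrix

variable {p : ℕ} {ι : Type*} [Fintype ι] [DecidableEq ι]

theorem exists_eq_natCast_mul_of_map_castHom_eq_zero {M : Matrix ι ι (ZMod (p ^ 2))}
    (hM : M.map (ZMod.castHom (dvd_pow_self p two_ne_zero) (ZMod p)) = 0) : ∃ Y, M = p * Y := by
  choose Y hY using fun i j => ZMod.exists_eq_mul_of_castHom_eq_zero (congrFun₂ hM i j)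
  exact ⟨of Y, by ext i j; simp [← nsmul_eq_mul, hY]⟩

theorem map_castHom_eq_zero_of_natCast_mul_eq_zero [NeZero p]
    {M : Matrix ι ι (ZMod (p ^ 2))} (hM : (p : Matrix ι ι (ZMod (p ^ 2))) * M = 0) :
    M.map (ZMod.castHom (dvd_pow_self p two_ne_zero) (ZMod p)) = 0 := by
  ext i j
  have := congrFun₂ hM i j
  simp only [← nsmul_eq_mul, smul_apply, zero_apply] at this
  exact ZMod.castHom_eq_zero_of_mul_eq_zero (by rwa [← nsmul_eq_mul])

end Matrix

theorem LiftsAlong.eq_one_of_pow_prime_eq_one {p : ℕ} [Fact p.Prime] {G V : Type*} [Group G]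
    [AddCommGroup V] [Module (ZMod p) V] {ρ : Representation (ZMod p) G V}
    (hρ : LiftsAlong ρ (ZMod (p ^ 2)) (ZMod.castHom (dvd_pow_self p two_ne_zero) (ZMod p)))
    {g : G} (hg : g ^ p = 1) {s : ℕ} (hs : s + 2 ≤ p) (hnil : (ρ g - 1) ^ s = 0) :
    ρ g = 1 := by
  obtain ⟨m, b, θ, hθ⟩ := hρ
  have hlift := map_eq_one_of_pow_prime_eq_one
    (ZMod.castHom (dvd_pow_self p two_ne_zero) (ZMod p)).mapMatrix Fact.out
    (fun _ => exists_eq_natCast_mul_of_map_castHom_eq_zero)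
    (fun _ => map_castHom_eq_zero_of_natCast_mul_eq_zero)
    (a := (θ g : Matrix (Fin m) (Fin m) (ZMod (p ^ 2))))
    (by rw [← Units.val_pow_eq_pow_val, ← map_pow, hg, map_one, Units.val_one]) hs
    (by rw [RingHom.mapMatrix_apply, hθ, ← LinearMap.toMatrix_one b, ← map_sub,
      LinearMap.toMatrix_pow, hnil, map_zero])
  rw [RingHom.mapMatrix_apply, hθ, ← LinearMap.toMatrix_one b] at hlift
  exact (LinearMap.toMatrix b b).injective hlift

section Shear

variable {K : Type*} [CommRing K]

variable (K) in
def shear : SpecialLinearGroup (Fin 2) K := ⟨!![1, 1; 0, 1], by simp⟩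

lemma shear_matrix_pow (k : ℕ) :
    (!![1, 1; 0, 1] : Matrix (Fin 2) (Fin 2) K) ^ k = !![1, (k : K); 0, 1] := by
  induction k with
  | zero => simp [one_fin_two]
  | succ k ih => simp [pow_succ, ih, add_comm]

lemma shear_pow_eq_one (p : ℕ) [CharP K p] : shear K ^ p = 1 :=
  Subtype.ext <| (shear_matrix_pow p).trans (by simp [one_fin_two])

lemma polySub_shear_X_zero :
    polySub (shear K : Matrix (Fin 2) (Fin 2) K) (X 0) = X 0 + X 1 := by
  simp [shear, polySub]

lemma polySub_shear_X_one : polySub (shear K : Matrix (Fin 2) (Fin 2) K) (X 1) = X 1 := by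
  simp [shear, polySub]

variable (K) in
def shearDiff : Module.End K (MvPolynomial (Fin 2) K) :=
  (polySub (shear K : Matrix (Fin 2) (Fin 2) K)).toLinearMap - 1

lemma shearDiff_X_zero_pow_mul_X_one_pow (i j : ℕ) :
    shearDiff K (X 0 ^ i * X 1 ^ j) =
      ∑ k ∈ Finset.range i, i.choose k • (X 0 ^ k * X 1 ^ (i - k + j)) := by
  simp only [shearDiff, LinearMap.sub_apply, AlgHom.toLinearMap_apply, Module.End.one_apply,
    map_mul, map_pow, polySub_shear_X_zero, polySub_shear_X_one, add_pow, Finset.sum_range_succ,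
    Nat.sub_self, pow_zero, mul_one, Nat.choose_self, Nat.cast_one, add_mul, Finset.sum_mul,
    add_sub_cancel_right]
  refine Finset.sum_congr rfl fun k _ => ?_
  rw [pow_add, nsmul_eq_mul]
  ring

lemma shearDiff_pow_succ_X_zero_pow_mul_X_one_pow (i j : ℕ) :
    (shearDiff K ^ (i + 1)) (X 0 ^ i * X 1 ^ j) = 0 := by
  induction i using Nat.strong_induction_on generalizing j with
  | _ i ih =>
    rw [pow_succ, Module.End.mul_apply, shearDiff_X_zero_pow_mul_X_one_pow, map_sum]
    refine Finset.sum_eq_zero fun k hk => ?_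
    have hk : k < i := Finset.mem_range.mp hk
    rw [map_nsmul, ← Nat.sub_add_cancel (by omega : k + 1 ≤ i), pow_add, Module.End.mul_apply,
      ih k hk, map_zero, smul_zero]

lemma shearDiff_pow_succ_eq_zero_of_mem_homogeneousSubmodule {n : ℕ}
    {f : MvPolynomial (Fin 2) K} (hf : f ∈ homogeneousSubmodule (Fin 2) K n) :
    (shearDiff K ^ (n + 1)) f = 0 := by
  rw [mem_homogeneousSubmodule] at hf
  rw [← support_sum_monomial_coeff f, map_sum]
  refine Finset.sum_eq_zero fun d hd => ?_
  have hdeg : d 0 + d 1 = n := by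
    simpa [Finsupp.weight_apply, Finsupp.sum_fintype, Fin.sum_univ_two] using
      hf (mem_support_iff.mp hd)
  rw [monomial_eq, Finsupp.prod_fintype _ _ (by simp), Fin.prod_univ_two, ← smul_eq_C_mul,
    map_smul, ← Nat.sub_add_cancel (by omega : d 0 + 1 ≤ n + 1), pow_add, Module.End.mul_apply,
    shearDiff_pow_succ_X_zero_pow_mul_X_one_pow, map_zero, smul_zero]

end Shear

section homPolyRep

variable {K : Type*} [Field K] {R : Type*} [CommRing R] [Algebra R K] {n : ℕ}

lemma homPolyRep_apply_coe (g : SpecialLinearGroup (Fin 2) K)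
    (v : homogeneousSubmodule (Fin 2) K n) :
    (homPolyRep K R n g v : MvPolynomial (Fin 2) K) =
      polySub ((g⁻¹ : SpecialLinearGroup (Fin 2) K) : Matrix (Fin 2) (Fin 2) K) v :=
  rfl

lemma homPolyRep_shear_inv_sub_one_pow : (homPolyRep K R n (shear K)⁻¹ - 1) ^ (n + 1) = 0 := by
  have hsemi : Function.Semiconj
      ((↑) : homogeneousSubmodule (Fin 2) K n → MvPolynomial (Fin 2) K)
      ⇑(homPolyRep K R n (shear K)⁻¹ - 1) (shearDiff K) :=
    fun v => by simp [homPolyRep_apply_coe, shearDiff]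
  refine LinearMap.ext fun v => Subtype.ext ?_
  rw [Module.End.pow_apply, hsemi.iterate_right (n + 1) v, ← Module.End.pow_apply,
    shearDiff_pow_succ_eq_zero_of_mem_homogeneousSubmodule v.2]
  rfl

lemma homPolyRep_shear_inv_ne_one (hn : n ≠ 0) : homPolyRep K R n (shear K)⁻¹ ≠ 1 := by
  intro h
  have hX : (X 0 ^ n : MvPolynomial (Fin 2) K) ∈ homogeneousSubmodule (Fin 2) K n := by
    simpa [mem_homogeneousSubmodule] using (isHomogeneous_X K (0 : Fin 2)).pow n
  have := congrArg (fun v : homogeneousSubmodule (Fin 2) K n => eval ![0, 1] v.1)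
    (LinearMap.congr_fun h ⟨_, hX⟩)
  simp [homPolyRep_apply_coe, polySub_shear_X_zero, hn] at this

end homPolyRep

theorem generic_case_no_lift_general (p r : ℕ) [Fact p.Prime]
    (n : ℕ) (hn1 : 1 ≤ n) (hn2 : n ≤ p - 3) :
    ¬ LiftsAlong (Vrep p r n) (ZMod (p ^ 2))
        (ZMod.castHom (dvd_pow_self p two_ne_zero) (ZMod p)) := fun hlift =>
  homPolyRep_shear_inv_ne_one (by omega) <|
    hlift.eq_one_of_pow_prime_eq_one (by rw [inv_pow, shear_pow_eq_one p, inv_one])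
      (s := n + 1) (by omega) homPolyRep_shear_inv_sub_one_pow

/-- **Proposition 4.2.** For `p > 3` prime, `r ≥ 1` and `1 ≤ n ≤ p - 3`, the module
`V_n(pʳ)` for `SL₂(pʳ)` does not lift to `ℤ/p²ℤ`. -/
theorem generic_case_no_lift (p r : ℕ) [Fact p.Prime] (hp : 3 < p) (hr : 1 ≤ r)
    (n : ℕ) (hn1 : 1 ≤ n) (hn2 : n ≤ p - 3) :
    ¬ LiftsAlong (Vrep p r n) (ZMod (p ^ 2))
        (ZMod.castHom (dvd_pow_self p two_ne_zero) (ZMod p)) :=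
  generic_case_no_lift_general p r n hn1 hn2
end
end

section
/- Let p be a prime, r ≥ 1 with p^r > 2, K the field with p^r elements, and G = SL₂(K). The K-subspace U of V_p(p^r) spanned by x^p and y^p is a K G-submodule of V_p(p^r); as F_p G-modules, U is isomorphic to V₁(p^r) and the quotient V_p(p^r)/U is isomorphic to V_{p−2}(p^r). -/
open MvPolynomial Matrix

noncomputable section

/-- The `K`-subspace of `K[x,y]` spanned by `x^p` and `y^p`. -/
def Usub (p r : ℕ) [Fact p.Prime] :
    Submodule (GaloisField p r) (MvPolynomial (Fin 2) (GaloisField p r)) :=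
  Submodule.span (GaloisField p r)
    {MvPolynomial.X 0 ^ p, MvPolynomial.X 1 ^ p}

lemma Usub_inv (p r : ℕ) [Fact p.Prime] (g : Matrix (Fin 2) (Fin 2) (GaloisField p r)) :
    ∀ f ∈ Usub p r, polySub g f ∈ Usub p r := by
  intro f hf
  induction hf using Submodule.span_induction with
  | mem x hx =>
      have hmem : ∀ i : Fin 2, (polySub g (MvPolynomial.X i)) ^ p ∈ Usub p r := by
        intro i
        have hX : polySub g (MvPolynomial.X i) =
            g i 0 • MvPolynomial.X 0 + g i 1 • MvPolynomial.X 1 := by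
          simp [polySub, Fin.sum_univ_two]
        rw [hX, add_pow_char, smul_pow, smul_pow]
        exact Submodule.add_mem _
          (Submodule.smul_mem _ _ (Submodule.subset_span (by simp)))
          (Submodule.smul_mem _ _ (Submodule.subset_span (by simp)))
      simp only [Set.mem_insert_iff, Set.mem_singleton_iff] at hx
      rcases hx with rfl | rfl
      · simpa [map_pow] using hmem 0
      · simpa [map_pow] using hmem 1
  | zero => simp
  | add x y _ _ hx hy => rw [map_add]; exact Submodule.add_mem _ hx hy
  | smul c x _ hx => rw [_root_.map_smul]; exact Submodule.smul_mem _ _ hx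

/-- The `𝔽_p`-representation of `SL₂(pʳ)` on `U = ⟨x^p, y^p⟩`. -/
def Urep (p r : ℕ) [Fact p.Prime] :
    Representation (ZMod p) (Matrix.SpecialLinearGroup (Fin 2) (GaloisField p r)) (Usub p r) where
  toFun g := LinearMap.restrictScalars (ZMod p)
    ((polySub ((g⁻¹ : Matrix.SpecialLinearGroup (Fin 2) (GaloisField p r)) :
        Matrix (Fin 2) (Fin 2) (GaloisField p r))).toLinearMap.restrict
      (p := Usub p r) (q := Usub p r) (fun f hf => Usub_inv p r _ f hf))
  map_one' := by
    refine LinearMap.ext fun x => Subtype.ext ?_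
    simp [LinearMap.restrict_apply, polySub_one]
  map_mul' g h := by
    refine LinearMap.ext fun x => Subtype.ext ?_
    simp [LinearMap.restrict_apply, _root_.mul_inv_rev, polySub_mul]

/-- `U = ⟨x^p, y^p⟩` regarded as an `𝔽_p`-submodule of `V_p(pʳ)`. -/
def UsubZ (p r : ℕ) [Fact p.Prime] :
    Submodule (ZMod p) (MvPolynomial.homogeneousSubmodule (Fin 2) (GaloisField p r) p) :=
  Submodule.restrictScalars (ZMod p)
    ((Usub p r).comap (MvPolynomial.homogeneousSubmodule (Fin 2) (GaloisField p r) p).subtype)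

lemma UsubZ_inv (p r : ℕ) [Fact p.Prime]
    (g : Matrix.SpecialLinearGroup (Fin 2) (GaloisField p r)) :
    UsubZ p r ≤ (UsubZ p r).comap (Vrep p r p g) := by
  intro x hx
  exact Usub_inv p r _ _ hx

/-- The quotient representation on the quotient by a `G`-invariant submodule. -/
def quotRep {R G M : Type*} [CommRing R] [Group G] [AddCommGroup M] [Module R M]
    (ρ : Representation R G M) (W : Submodule R M) (hW : ∀ g : G, W ≤ W.comap (ρ g)) :
    Representation R G (M ⧸ W) where
  toFun g := W.mapQ W (ρ g) (hW g)
  map_one' := by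
    refine Submodule.linearMap_qext _ ?_
    refine LinearMap.ext fun x => ?_
    simp [Submodule.mapQ_apply]
  map_mul' g h := by
    refine Submodule.linearMap_qext _ ?_
    refine LinearMap.ext fun x => ?_
    simp [Submodule.mapQ_apply]

/-!
The Frobenius map `f ↦ f ^ p` is additive and injective, commutes with every substitution, and,
`K` being perfect, maps `V₁ = ⟨x, y⟩` onto `U = ⟨x^p, y^p⟩`.

For `f ∈ V_p`, Euler's identity `x ∂f/∂x + y ∂f/∂y = p f = 0` shows that `y ∣ ∂f/∂x`, so
`D f := (∂f/∂x) / y` satisfies `∂f/∂x = y D f` and `∂f/∂y = -x D f`. The chain rule then gives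
`D (f ∘ g) = det g · (D f) ∘ g`, so `D : V_p → V_{p-2}` is `SL₂(K)`-equivariant. Its kernel is
`{∂f/∂x = 0} = U`, because `∂(x^a y^(p-a))/∂x = a x^(a-1) y^(p-a)` with `a ≠ 0` in `K` for
`0 < a < p`, and it is onto since `D (x^(a+1) y^(b+1)) = (a + 1) x^a y^b` with `0 < a + 1 < p`.
-/

lemma CharP.natCast_ne_zero_of_pos_of_lt {K : Type*} [AddMonoidWithOne K] {p : ℕ} [CharP K p]
    {n : ℕ} (h0 : 0 < n) (hn : n < p) : (n : K) ≠ 0 :=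
  (CharP.cast_eq_zero_iff K p n).not.mpr (Nat.not_dvd_of_pos_of_lt h0 hn)

namespace MvPolynomial

variable {σ τ K : Type*}

lemma IsHomogeneous.divMonomial [CommSemiring K] {φ : MvPolynomial σ K} {n : ℕ}
    (h : φ.IsHomogeneous n) (s : σ →₀ ℕ) : (φ.divMonomial s).IsHomogeneous (n - s.degree) := by
  intro m hm
  rw [coeff_divMonomial] at hm
  have hsm := h hm
  have hs : s.degree = Finsupp.weight 1 s := by rw [Finsupp.degree_eq_weight_one]; rfl
  rw [map_add] at hsm
  omega

lemma pderiv_aeval [Fintype τ] [CommSemiring K] (s : τ → MvPolynomial σ K) (i : σ)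
    (f : MvPolynomial τ K) :
    pderiv i (aeval s f) = ∑ j, aeval s (pderiv j f) * pderiv i (s j) := by
  classical
  induction f using MvPolynomial.induction_on with
  | C a => simp
  | add f g hf hg => simp only [map_add, add_mul, hf, hg, Finset.sum_add_distrib]
  | mul_X f j ih =>
    simp only [map_mul, aeval_X, pderiv_mul, ih, pderiv_X, map_add, add_mul,
      Finset.sum_add_distrib, Finset.sum_mul, Pi.single_apply]
    simp [mul_right_comm]

lemma exists_pow_eq_iff_mem_span_X_pow [Fintype σ] [CommRing K] (p : ℕ) [Fact p.Prime]
    [CharP K p] [PerfectRing K p] {u : MvPolynomial σ K} :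
    (∃ f ∈ Submodule.span K (Set.range X), f ^ p = u) ↔
      u ∈ Submodule.span K (Set.range fun i => (X i : MvPolynomial σ K) ^ p) := by
  have pow_sum (c : σ → K) :
      (∑ i, c i • (X i : MvPolynomial σ K)) ^ p = ∑ i, c i ^ p • X i ^ p := by
    simp only [sum_pow_char, smul_pow]
  simp only [Submodule.mem_span_range_iff_exists_fun]
  constructor
  · rintro ⟨_, ⟨c, rfl⟩, rfl⟩
    exact ⟨fun i => c i ^ p, (pow_sum c).symm⟩
  · rintro ⟨c, rfl⟩
    refine ⟨_, ⟨fun i => (frobeniusEquiv K p).symm (c i), rfl⟩, ?_⟩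
    simp only [pow_sum, frobeniusEquiv_symm_pow_p]

lemma pderiv_polySub [CommSemiring K] (M : Matrix (Fin 2) (Fin 2) K) (i : Fin 2)
    (f : MvPolynomial (Fin 2) K) :
    pderiv i (polySub M f) = ∑ j, polySub M (pderiv j f) * C (M j i) := by
  classical
  rw [polySub, pderiv_aeval]
  congr! 2 with j
  fin_cases i <;> simp [pderiv_X, smul_eq_C_mul]

/-- `D f = (∂f/∂x) / y` for `x = X 0`, `y = X 1`, where `divMonomial` drops the monomials not
divisible by `y`; on `V_p` in characteristic `p` nothing is dropped (`X_one_mul_dxDivY`). -/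
def dxDivY (K : Type*) [CommSemiring K] :
    MvPolynomial (Fin 2) K →ₗ[K] MvPolynomial (Fin 2) K where
  toFun f := (pderiv 0 f).divMonomial (Finsupp.single 1 1)
  map_add' f g := by rw [map_add, add_divMonomial]
  map_smul' c f := by ext m; simp [coeff_divMonomial]

lemma isHomogeneous_dxDivY [CommSemiring K] {f : MvPolynomial (Fin 2) K} {n : ℕ}
    (hf : f.IsHomogeneous n) : (dxDivY K f).IsHomogeneous (n - 2) := by
  have h := (hf.pderiv (i := 0)).divMonomial (Finsupp.single 1 1)
  rwa [Finsupp.degree_single, Nat.sub_sub] at h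

lemma dxDivY_X_mul_X_mul_monomial [CommRing K] (d : Fin 2 →₀ ℕ) (c : K) :
    dxDivY K (X 0 * X 1 * monomial d c) = monomial d ((d 0 + 1) * c) := by
  have hx : X 0 * pderiv 0 (monomial d c) = d 0 • monomial d c := X_mul_pderiv_monomial
  have h : pderiv 0 (X 0 * X 1 * monomial d c) = X 1 * monomial d ((d 0 + 1) * c) := by
    simp only [pderiv_mul, pderiv_X_self, pderiv_X_of_ne (by decide : (1 : Fin 2) ≠ 0)]
    rw [add_one_mul (d 0 : K), map_add, ← nsmul_eq_mul, map_nsmul]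
    linear_combination X 1 * hx
  change (pderiv 0 _).divMonomial _ = _
  rw [h, X_mul_divMonomial]

def dxDivYHom (K : Type*) [CommSemiring K] (n : ℕ) :
    homogeneousSubmodule (Fin 2) K n →ₗ[K] homogeneousSubmodule (Fin 2) K (n - 2) :=
  (dxDivY K).restrict fun _ hf => isHomogeneous_dxDivY hf

section CharP

variable [Field K] {p : ℕ} [CharP K p] {f : MvPolynomial (Fin 2) K}

lemma IsHomogeneous.X_mul_pderiv_add_X_mul_pderiv_eq_zero (hf : f.IsHomogeneous p) :
    X 0 * pderiv 0 f + X 1 * pderiv 1 f = 0 := by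
  rw [← Fin.sum_univ_two (fun i => X i * pderiv i f), hf.sum_X_mul_pderiv, nsmul_eq_mul,
    CharP.cast_eq_zero, zero_mul]

lemma IsHomogeneous.X_one_mul_dxDivY (hf : f.IsHomogeneous p) :
    X 1 * dxDivY K f = pderiv 0 f := by
  have hdvd : X 1 ∣ pderiv 0 f := by
    have h : X 1 ∣ X 0 * pderiv 0 f :=
      ⟨-pderiv 1 f, by linear_combination hf.X_mul_pderiv_add_X_mul_pderiv_eq_zero⟩
    exact (X_prime.dvd_or_dvd h).resolve_left (by simp)
  have h := divMonomial_add_modMonomial_single (pderiv 0 f) 1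
  rwa [X_dvd_iff_modMonomial_eq_zero.mp hdvd, add_zero] at h

lemma IsHomogeneous.X_zero_mul_dxDivY (hf : f.IsHomogeneous p) :
    X 0 * dxDivY K f = -pderiv 1 f :=
  mul_left_cancel₀ (X_ne_zero 1) <| by
    linear_combination X 0 * hf.X_one_mul_dxDivY + hf.X_mul_pderiv_add_X_mul_pderiv_eq_zero

lemma IsHomogeneous.dxDivY_polySub (hf : f.IsHomogeneous p) {M : Matrix (Fin 2) (Fin 2) K}
    (hM : M.det = 1) : dxDivY K (polySub M f) = polySub M (dxDivY K f) := by
  have hMf : (polySub M f).IsHomogeneous p := polySub_mem M hf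
  have hX (i : Fin 2) : polySub M (X i) = C (M i 0) * X 0 + C (M i 1) * X 1 := by
    simp [polySub, Fin.sum_univ_two, smul_eq_C_mul]
  have hdet : C (M 0 0) * C (M 1 1) - C (M 0 1) * C (M 1 0) = (1 : MvPolynomial (Fin 2) K) := by
    rw [← map_mul, ← map_mul, ← map_sub, ← det_fin_two M, hM, map_one]
  have h0 := congrArg (polySub M) hf.X_one_mul_dxDivY
  have h1 := congrArg (polySub M) hf.X_zero_mul_dxDivY
  rw [map_mul, hX] at h0 h1
  rw [map_neg] at h1
  apply mul_left_cancel₀ (X_ne_zero (1 : Fin 2))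
  rw [hMf.X_one_mul_dxDivY, pderiv_polySub, Fin.sum_univ_two]
  linear_combination -C (M 0 0) * h0 + C (M 1 0) * h1 + X 1 * polySub M (dxDivY K f) * hdet

lemma pderiv_zero_eq_zero_of_mem_span_X_pow
    (hf : f ∈ Submodule.span K {X 0 ^ p, X 1 ^ p}) : pderiv 0 f = 0 := by
  induction hf using Submodule.span_induction with
  | mem x hx => rcases hx with rfl | rfl <;> simp
  | zero => simp
  | add x y _ _ hx hy => simp [hx, hy]
  | smul c x _ hx => simp [hx]

lemma IsHomogeneous.pderiv_zero_eq_zero_iff (hf : f.IsHomogeneous p) :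
    pderiv 0 f = 0 ↔ f ∈ Submodule.span K {X 0 ^ p, X 1 ^ p} := by
  refine ⟨fun h => ?_, pderiv_zero_eq_zero_of_mem_span_X_pow⟩
  rw [f.as_sum]
  refine Submodule.sum_mem _ fun d hd => ?_
  have hdeg : d 0 + d 1 = p := by
    simpa [Finsupp.weight_apply, Finsupp.sum_fintype] using hf (mem_support_iff.mp hd)
  have hd0 : d 0 = 0 ∨ d 0 = p := by
    by_contra! hne
    have hcoeff := congrArg (coeff (d - Finsupp.single 0 1)) h
    rw [coeff_pderiv, coeff_zero,
      tsub_add_cancel_of_le (Finsupp.single_le_iff.mpr (by omega)), Finsupp.tsub_apply,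
      Finsupp.single_eq_same, ← Nat.cast_add_one, Nat.sub_add_cancel (by omega)] at hcoeff
    exact mem_support_iff.mp hd <| (mul_eq_zero.mp hcoeff).resolve_right
      (CharP.natCast_ne_zero_of_pos_of_lt (by omega) (by omega))
  have hmem (i : Fin 2) (hi : d = Finsupp.single i p) :
      monomial d (coeff d f) ∈ Submodule.span K {X 0 ^ p, X 1 ^ p} := by
    rw [hi, ← mul_one (coeff _ f), ← smul_eq_mul, ← smul_monomial, ← X_pow_eq_monomial]
    exact Submodule.smul_mem _ _ (Submodule.subset_span (by fin_cases i <;> simp))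
  rcases hd0 with h0 | h0
  · exact hmem 1 (by ext i; fin_cases i <;> simp <;> omega)
  · exact hmem 0 (by ext i; fin_cases i <;> simp <;> omega)

variable (p)

lemma ker_dxDivYHom : LinearMap.ker (dxDivYHom K p) =
    (Submodule.span K {X 0 ^ p, X 1 ^ p}).comap (homogeneousSubmodule (Fin 2) K p).subtype := by
  ext ⟨f, hf⟩
  rw [LinearMap.mem_ker, Submodule.mem_comap, Submodule.subtype_apply,
    ← IsHomogeneous.pderiv_zero_eq_zero_iff hf, ← IsHomogeneous.X_one_mul_dxDivY hf,
    mul_eq_zero, or_iff_right (X_ne_zero 1), ← Subtype.val_inj]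
  rfl

lemma dxDivYHom_surjective [Fact p.Prime] : Function.Surjective (dxDivYHom K p) := by
  suffices homogeneousSubmodule (Fin 2) K (p - 2) ≤
      (homogeneousSubmodule (Fin 2) K p).map (dxDivY K) by
    rintro ⟨h, hh⟩
    obtain ⟨f, hf, rfl⟩ := this hh
    exact ⟨⟨f, hf⟩, rfl⟩
  rw [homogeneousSubmodule_eq_finsupp_supported, AddMonoidAlgebra.supported_eq_span_single,
    Submodule.span_le]
  rintro _ ⟨d, hd, rfl⟩
  have hp := (Fact.out : p.Prime).two_le
  have hdeg : d 0 + d 1 = p - 2 := by rwa [← Fin.sum_univ_two, ← Finsupp.degree_eq_sum]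
  have hunit : (d 0 + 1 : K) ≠ 0 := by
    exact_mod_cast CharP.natCast_ne_zero_of_pos_of_lt (K := K) (Nat.succ_pos (d 0)) (by omega)
  refine ⟨X 0 * X 1 * monomial d (d 0 + 1 : K)⁻¹, ?_, ?_⟩
  · have h := ((isHomogeneous_X K 0).mul (isHomogeneous_X K 1)).mul
      (isHomogeneous_monomial (d 0 + 1 : K)⁻¹ hd)
    rwa [show 1 + 1 + (p - 2) = p by omega] at h
  · rw [dxDivY_X_mul_X_mul_monomial, mul_inv_cancel₀ hunit]
    rfl

lemma dxDivYHom_homPolyRep (R : Type*) [CommRing R] [Algebra R K]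
    (g : Matrix.SpecialLinearGroup (Fin 2) K) (f : homogeneousSubmodule (Fin 2) K p) :
    dxDivYHom K p (homPolyRep K R p g f) = homPolyRep K R (p - 2) g (dxDivYHom K p f) :=
  Subtype.ext (IsHomogeneous.dxDivY_polySub f.2 (Matrix.SpecialLinearGroup.det_coe _))

end CharP

end MvPolynomial

section GaloisField

variable (p r : ℕ) [Fact p.Prime]

lemma Usub_le_homogeneousSubmodule :
    Usub p r ≤ homogeneousSubmodule (Fin 2) (GaloisField p r) p := by
  rw [Usub, Submodule.span_le, Set.insert_subset_iff, Set.singleton_subset_iff]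
  exact ⟨isHomogeneous_X_pow 0 p, isHomogeneous_X_pow 1 p⟩

lemma exists_pow_eq_iff_mem_Usub {u : MvPolynomial (Fin 2) (GaloisField p r)} :
    (∃ f ∈ homogeneousSubmodule (Fin 2) (GaloisField p r) 1, f ^ p = u) ↔ u ∈ Usub p r := by
  have hU : Usub p r = Submodule.span (GaloisField p r) (Set.range fun i => X i ^ p) := by
    rw [Usub]
    congr 1
    ext
    simp [Fin.exists_fin_two, eq_comm]
  rw [hU, homogeneousSubmodule_one_eq_span_X, exists_pow_eq_iff_mem_span_X_pow]

def frobeniusEquivUsub : homogeneousSubmodule (Fin 2) (GaloisField p r) 1 ≃ₗ[ZMod p] Usub p r :=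
  LinearEquiv.ofBijective
    (AddMonoidHom.toZModLinearMap p <| AddMonoidHom.mk'
      (fun f : homogeneousSubmodule (Fin 2) (GaloisField p r) 1 =>
        (⟨f ^ p, (exists_pow_eq_iff_mem_Usub p r).mp ⟨f, f.2, rfl⟩⟩ : Usub p r))
      (fun f g => Subtype.ext (add_pow_char _ _ _)))
    ⟨fun f g h => Subtype.ext (frobenius_inj _ p (congrArg Subtype.val h)),
      fun u => by
        obtain ⟨f, hf, hfu⟩ := (exists_pow_eq_iff_mem_Usub p r).mpr u.2
        exact ⟨⟨f, hf⟩, Subtype.ext hfu⟩⟩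

lemma frobeniusEquivUsub_Vrep (g : Matrix.SpecialLinearGroup (Fin 2) (GaloisField p r))
    (f : homogeneousSubmodule (Fin 2) (GaloisField p r) 1) :
    frobeniusEquivUsub p r (Vrep p r 1 g f) = Urep p r g (frobeniusEquivUsub p r f) :=
  Subtype.ext
    (map_pow (polySub (g⁻¹ : Matrix.SpecialLinearGroup (Fin 2) (GaloisField p r)).1) f.1 p).symm

lemma UsubZ_eq_ker :
    UsubZ p r = LinearMap.ker ((dxDivYHom (GaloisField p r) p).restrictScalars (ZMod p)) := by
  rw [LinearMap.ker_restrictScalars, ker_dxDivYHom]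
  rfl

def quotientUsubZEquiv :
    (homogeneousSubmodule (Fin 2) (GaloisField p r) p ⧸ UsubZ p r) ≃ₗ[ZMod p]
      homogeneousSubmodule (Fin 2) (GaloisField p r) (p - 2) :=
  (Submodule.quotEquivOfEq _ _ (UsubZ_eq_ker p r)).trans
    (LinearMap.quotKerEquivOfSurjective _ (dxDivYHom_surjective p))

end GaloisField

theorem Vp_structure_general (p r : ℕ) [Fact p.Prime] :
    (Usub p r ≤ MvPolynomial.homogeneousSubmodule (Fin 2) (GaloisField p r) p) ∧
    (∀ (g : Matrix.SpecialLinearGroup (Fin 2) (GaloisField p r))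
        (f : MvPolynomial (Fin 2) (GaloisField p r)), f ∈ Usub p r →
        polySub (g : Matrix (Fin 2) (Fin 2) (GaloisField p r)) f ∈ Usub p r) ∧
    (∃ e : Usub p r ≃ₗ[ZMod p]
        MvPolynomial.homogeneousSubmodule (Fin 2) (GaloisField p r) 1,
      ∀ g x, e (Urep p r g x) = Vrep p r 1 g (e x)) ∧
    (∃ e : ((MvPolynomial.homogeneousSubmodule (Fin 2) (GaloisField p r) p) ⧸ UsubZ p r)
        ≃ₗ[ZMod p] MvPolynomial.homogeneousSubmodule (Fin 2) (GaloisField p r) (p - 2),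
      ∀ g x, e (quotRep (Vrep p r p) (UsubZ p r) (UsubZ_inv p r) g x) =
        Vrep p r (p - 2) g (e x)) := by
  refine ⟨Usub_le_homogeneousSubmodule p r, fun g f hf => Usub_inv p r _ f hf,
    ⟨(frobeniusEquivUsub p r).symm, fun g x => ?_⟩, ⟨quotientUsubZEquiv p r, fun g x => ?_⟩⟩
  · rw [LinearEquiv.symm_apply_eq, frobeniusEquivUsub_Vrep, LinearEquiv.apply_symm_apply]
  · obtain ⟨f, rfl⟩ := Submodule.Quotient.mk_surjective _ x
    exact dxDivYHom_homPolyRep p (ZMod p) g f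

/-- **Lemma (structure of `V_p(pʳ)`).** For `pʳ > 2`, the `K`-span `U` of `x^p, y^p` is an
`SL₂(K)`-invariant subspace of `V_p(pʳ)`; as `𝔽_p SL₂(pʳ)`-modules, `U ≅ V₁(pʳ)` and
`V_p(pʳ)/U ≅ V_{p-2}(pʳ)`. -/
theorem Vp_structure (p r : ℕ) [Fact p.Prime] (hr : 1 ≤ r) (hpr : 2 < p ^ r) :
    (Usub p r ≤ MvPolynomial.homogeneousSubmodule (Fin 2) (GaloisField p r) p) ∧
    (∀ (g : Matrix.SpecialLinearGroup (Fin 2) (GaloisField p r))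
        (f : MvPolynomial (Fin 2) (GaloisField p r)), f ∈ Usub p r →
        polySub (g : Matrix (Fin 2) (Fin 2) (GaloisField p r)) f ∈ Usub p r) ∧
    (∃ e : Usub p r ≃ₗ[ZMod p]
        MvPolynomial.homogeneousSubmodule (Fin 2) (GaloisField p r) 1,
      ∀ g x, e (Urep p r g x) = Vrep p r 1 g (e x)) ∧
    (∃ e : ((MvPolynomial.homogeneousSubmodule (Fin 2) (GaloisField p r) p) ⧸ UsubZ p r)
        ≃ₗ[ZMod p] MvPolynomial.homogeneousSubmodule (Fin 2) (GaloisField p r) (p - 2),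
      ∀ g x, e (quotRep (Vrep p r p) (UsubZ p r) (UsubZ_inv p r) g x) =
        Vrep p r (p - 2) g (e x)) :=
  Vp_structure_general p r
end
end
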